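/- Let D be a smooth DNNF covered by separators (with fixed collections 𝒮_i) and let a : ⟦x⟧ ∪ v → {0,1} be a d-consistent total assignment of the domain variables and the node variables. Then the following are equivalent: (i) the set of nodes v with a(v)=1 induces a minimal satisfying subtree of D; (ii) a satisfies ψ_c; (iii) a satisfies ψ_p. -/

import Mathlib

set_option autoImplicit false

universe u v

/-- A literal: a boolean variable together with a polarity. -/
structure Lit (V : Type u) where
  var : V
  pos : Bool

/-- The complementary literal. -/
def Lit.negate {V : Type u} (l : Lit V) : Lit V := ⟨l.var, !l.pos⟩

/-- A literal is satisfied by a total assignment. -/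
def Lit.eval {V : Type u} (a : V → Bool) (l : Lit V) : Prop := a l.var = l.pos

/-- A clause is a (finite in all our uses) disjunction of a set of literals. -/
abbrev Clause (V : Type u) := Set (Lit V)

/-- A CNF formula is a conjunction of a set of clauses. -/
abbrev CNF (V : Type u) := Set (Clause V)

/-- A clause is satisfied iff some of its literals is. -/
def Clause.Sat {V : Type u} (a : V → Bool) (C : Clause V) : Prop := ∃ l ∈ C, Lit.eval a l

/-- A CNF formula is satisfied iff all of its clauses are. -/
def CNF.Sat {V : Type u} (a : V → Bool) (φ : CNF V) : Prop := ∀ C ∈ φ, Clause.Sat a C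

def CNF.Satisfiable {V : Type u} (φ : CNF V) : Prop := ∃ a : V → Bool, CNF.Sat a φ

/-- `φ ⊨ l`. -/
def CNF.Entails {V : Type u} (φ : CNF V) (l : Lit V) : Prop :=
  ∀ a : V → Bool, CNF.Sat a φ → Lit.eval a l

/-- A partial assignment, i.e. a set of literals, is consistent if it contains
no complementary pair of literals. -/
def ConsistentPA {V : Type u} (α : Set (Lit V)) : Prop := ∀ l ∈ α, Lit.negate l ∉ α

/-- The set of unit clauses corresponding to a partial assignment `α`;
`φ ∪ paUnits α` represents `φ ∧ α`. -/
def paUnits {V : Type u} (α : Set (Lit V)) : CNF V := (fun l => ({l} : Clause V)) '' α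

/-- Derivability by repeated unit resolution: from a clause `C ∋ l` and the unit
clause `¬l` derive `C \ {l}`.  `UnitDeriv φ ∅` means `φ ⊢₁ ⊥` and
`UnitDeriv φ {l}` means `φ ⊢₁ l`. -/
inductive UnitDeriv {V : Type u} (φ : CNF V) : Clause V → Prop where
  | base {C : Clause V} : C ∈ φ → UnitDeriv φ C
  | step {C : Clause V} (l : Lit V) : l ∈ C → UnitDeriv φ C →
      UnitDeriv φ {Lit.negate l} → UnitDeriv φ (C \ {l})

/-- The set of variables occurring in a CNF formula. -/
def CNF.vars {V : Type u} (φ : CNF V) : Set V := ⋃ C ∈ φ, Lit.var '' C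

/-- All literals of `α` are literals on the variables `W`. -/
def LitsOn {V : Type u} (α : Set (Lit V)) (W : Set V) : Prop := ∀ l ∈ α, l.var ∈ W

/-- `φ` is unit refutation complete on the variables `W`. -/
def URCon {V : Type u} (φ : CNF V) (W : Set V) : Prop :=
  ∀ α : Set (Lit V), ConsistentPA α → LitsOn α W →
    ¬ CNF.Satisfiable (φ ∪ paUnits α) → UnitDeriv (φ ∪ paUnits α) ∅

/-- `φ` is propagation complete on the variables `W`. -/
def PCon {V : Type u} (φ : CNF V) (W : Set V) : Prop :=
  ∀ α : Set (Lit V), ConsistentPA α → LitsOn α W →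
    ∀ l : Lit V, l.var ∈ W → CNF.Entails (φ ∪ paUnits α) l →
      UnitDeriv (φ ∪ paUnits α) {l} ∨ UnitDeriv (φ ∪ paUnits α) ∅

/-- `φ` is a CNF encoding of the function `f` with input variables `X`
(the remaining variables of `φ` being auxiliary); `f` is assumed to depend
only on the values of the variables in `X`. -/
def IsEncodingOn {V : Type u} (φ : CNF V) (X : Set V) (f : (V → Bool) → Prop) : Prop :=
  ∀ a : V → Bool, f a ↔ ∃ b : V → Bool, (∀ x ∈ X, b x = a x) ∧ CNF.Sat b φ

/-- The positive literal on a variable. -/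
def posL {V : Type u} (x : V) : Lit V := ⟨x, true⟩
/-- The negative literal on a variable. -/
def negL {V : Type u} (x : V) : Lit V := ⟨x, false⟩

/-! ## Smooth DNNFs over variables with finite domains -/

/-- The label of a node of an NNF: an ∧-node, an ∨-node, or a leaf labeled
with the domain variable `⟦x_i = s⟧`. -/
inductive NLabel (n : ℕ) : Type where
  | And : NLabel n
  | Or : NLabel n
  | Leaf : Fin n → ℕ → NLabel n

/-- An NNF: a rooted DAG whose inner nodes are labeled `∧` or `∨` and whose
leaves are labeled with domain variables `⟦x_i = s⟧` (`s ∈ Dom i`) of the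
variables `x₁, …, xₙ` with finite domains `Dom i`.  The edge `edge v u` means
that `u` is a child (an input) of `v`.  Well-formedness conditions are
collected in `NNF.WF`. -/
structure NNF : Type 1 where
  /-- the nodes -/
  N : Type
  /-- `edge v u`: there is an edge from `v` to its child `u` -/
  edge : N → N → Prop
  /-- the root -/
  root : N
  /-- the number of variables -/
  n : ℕ
  /-- the (finite, non-empty) domains of the variables -/
  Dom : Fin n → Set ℕ
  /-- the label of each node -/
  label : N → NLabel n

namespace NNF

/-- Reachability along directed edges. -/
def Reach (D : NNF) (v u : D.N) : Prop := Relation.ReflTransGen D.edge v u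

/-- `var(v)`: the set of variables `x_i` such that a leaf labeled with a domain
variable of `x_i` is reachable from `v`. -/
def varsOf (D : NNF) (v : D.N) : Set (Fin D.n) :=
  {i | ∃ u s, D.Reach v u ∧ D.label u = NLabel.Leaf i s}

/-- `v` is a leaf. -/
def IsLeaf (D : NNF) (v : D.N) : Prop := ∃ i s, D.label v = NLabel.Leaf i s

/-- `H_i`: the set of nodes `v` with `x_i ∈ var(v)`; the subgraph of `D`
induced on `H_i` is `D_i`. -/
def H (D : NNF) (i : Fin D.n) : Set D.N := {v | i ∈ D.varsOf v}

/-- `L_i`: the set of leaves labeled with domain variables of `x_i`. -/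
def Lset (D : NNF) (i : Fin D.n) : Set D.N := {v | ∃ s, D.label v = NLabel.Leaf i s}

/-- Well-formedness of an NNF: the domains are non-empty; the edge relation is
well-founded (the DAG is acyclic); leaves are labeled with domain variables
(`s ∈ Dom i`) and have no outgoing edges; each domain variable labels at most
one leaf; every node is reachable from the root; for each `i` at least one
domain variable of `x_i` labels a leaf; and every node has a leaf below it
(no node represents a constant). -/
def WF (D : NNF) : Prop :=
  (∀ i, (D.Dom i).Nonempty) ∧
  WellFounded (fun u v : D.N => D.edge v u) ∧
  (∀ v i s, D.label v = NLabel.Leaf i s → s ∈ D.Dom i) ∧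
  (∀ v i s, D.label v = NLabel.Leaf i s → ∀ u, ¬ D.edge v u) ∧
  (∀ v w i s, D.label v = NLabel.Leaf i s → D.label w = NLabel.Leaf i s → v = w) ∧
  (∀ v, D.Reach D.root v) ∧
  (∀ i, ∃ v s, D.label v = NLabel.Leaf i s) ∧
  (∀ v, ∃ i, i ∈ D.varsOf v)

/-- Decomposability: the children of every ∧-node have pairwise disjoint sets
of variables. -/
def Decomposable (D : NNF) : Prop :=
  ∀ v, D.label v = NLabel.And →
    ∀ u₁ u₂, D.edge v u₁ → D.edge v u₂ → u₁ ≠ u₂ →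
      Disjoint (D.varsOf u₁) (D.varsOf u₂)

/-- Smoothness: every child of an ∨-node `v` has the same variables as `v`. -/
def Smooth (D : NNF) : Prop :=
  ∀ v u, D.label v = NLabel.Or → D.edge v u → D.varsOf u = D.varsOf v

/-- A node of `D` evaluates to `true` under the assignment `a` of the domain
variables, where the children are taken with respect to the edge relation `E`
(this generality is used when edges are removed from `D`). -/
inductive EvalWith (D : NNF) (E : D.N → D.N → Prop) (a : Fin D.n × ℕ → Bool) : D.N → Prop where
  | leaf {v : D.N} {i : Fin D.n} {s : ℕ} :
      D.label v = NLabel.Leaf i s → a (i, s) = true → EvalWith D E a v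
  | and {v : D.N} : D.label v = NLabel.And →
      (∀ u, E v u → EvalWith D E a u) → EvalWith D E a v
  | or {v u : D.N} : D.label v = NLabel.Or → E v u →
      EvalWith D E a u → EvalWith D E a v

/-- A node of `D` evaluates to `true` under the assignment `a`. -/
def EvalTrue (D : NNF) (a : Fin D.n × ℕ → Bool) (v : D.N) : Prop :=
  D.EvalWith D.edge a v

/-- `f_D(⟦x⟧)`: the monotone boolean function of the domain variables computed
by `D`. -/
def fD (D : NNF) (a : Fin D.n × ℕ → Bool) : Prop := D.EvalTrue a D.root

/-- The direct encoding constraints: for each `i` exactly one domain variable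
of `x_i` is true. -/
def DConsistent (D : NNF) (a : Fin D.n × ℕ → Bool) : Prop :=
  ∀ i, ∃! s, s ∈ D.Dom i ∧ a (i, s) = true

/-- `f_D'(⟦x⟧)`: the conjunction of `f_D` and the direct encoding constraints. -/
def fD' (D : NNF) (a : Fin D.n × ℕ → Bool) : Prop := D.fD a ∧ D.DConsistent a

/-- A subgraph of `D`: a set of nodes together with a set of edges of `D`
between them. -/
structure Subgraph (D : NNF) : Type where
  mem : Set D.N
  tedge : D.N → D.N → Prop
  le_edge : ∀ {v u}, tedge v u → D.edge v u
  mem_left : ∀ {v u}, tedge v u → v ∈ mem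
  mem_right : ∀ {v u}, tedge v u → u ∈ mem

/-- A minimal satisfying subtree of `D`: a rooted subtree (out-arborescence)
of `D` whose root is the root of `D`, which contains all the `D`-edges out of
each of its ∧-nodes and exactly one `D`-edge out of each of its ∨-nodes. -/
def IsMST (D : NNF) (T : D.Subgraph) : Prop :=
  D.root ∈ T.mem ∧
  (∀ v ∈ T.mem, Relation.ReflTransGen T.tedge D.root v) ∧
  (∀ v ∈ T.mem, v ≠ D.root → ∃! u, T.tedge u v) ∧
  (∀ u, ¬ T.tedge u D.root) ∧
  (∀ v ∈ T.mem, D.label v = NLabel.And → ∀ u, D.edge v u → T.tedge v u) ∧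
  (∀ v ∈ T.mem, D.label v = NLabel.Or → ∃! u, T.tedge v u)

/-- `β_T`: the total assignment of the domain variables that sets to `1`
exactly the domain variables labeling the leaves of `T`. -/
noncomputable def beta (D : NNF) (T : D.Subgraph) : Fin D.n × ℕ → Bool :=
  fun p => @decide (∃ v ∈ T.mem, D.label v = NLabel.Leaf p.1 p.2)
    (Classical.propDecidable _)

/-- A root-to-leaf path in `D_i` (the subgraph of `D` induced on `H_i`),
represented by the list of its nodes. -/
def IsRLPath (D : NNF) (i : Fin D.n) (p : List D.N) : Prop :=
  p ≠ [] ∧ (∀ v ∈ p, v ∈ D.H i) ∧ List.Chain' D.edge p ∧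
  p.head? = some D.root ∧ ∃ t, p.getLast? = some t ∧ t ∈ D.Lset i

/-- A separator in `D_i`: a set `S ⊆ H_i` such that every path in `D_i` from
the root to a leaf contains precisely one node of `S`. -/
def IsSeparator (D : NNF) (i : Fin D.n) (S : Set D.N) : Prop :=
  S ⊆ D.H i ∧ ∀ p, D.IsRLPath i p → ∃! w, w ∈ p ∧ w ∈ S

/-- `D` is covered by the collections `𝒮 i` of separators: each `S ∈ 𝒮 i` is a
separator in `D_i` and the union of `𝒮 i` is `H_i ∖ {ρ}`. -/
def CoveredBy (D : NNF) (𝒮 : ∀ _ : Fin D.n, Set (Set D.N)) : Prop :=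
  ∀ i, (∀ S ∈ 𝒮 i, D.IsSeparator i S) ∧ ⋃₀ 𝒮 i = D.H i \ {D.root}

/-- `D` can be covered by separators. -/
def Covered (D : NNF) : Prop := ∃ 𝒮, D.CoveredBy 𝒮

end NNF

namespace NNF

/-- The variables of the encodings of `D`: `Sum.inl (i, s)` is the domain
variable `⟦x_i = s⟧` and `Sum.inr v` is the boolean variable of the inner node
`v`.  Leaf nodes are identified with the domain variables labeling them via
`NNF.nvar`. -/
abbrev EVar (D : NNF) : Type := (Fin D.n × ℕ) ⊕ D.N

/-- The variable of a node of `D`: a leaf is identified with the domain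
variable labeling it, an inner node is a variable of its own. -/
def nvar (D : NNF) (v : D.N) : D.EVar :=
  match D.label v with
  | NLabel.Leaf i s => Sum.inl (i, s)
  | NLabel.And => Sum.inr v
  | NLabel.Or => Sum.inr v

/-- Group N1: `v → v₁ ∨ … ∨ v_k` for each ∨-node `v` with children
`v₁, …, v_k`. -/
def grpN1 (D : NNF) : CNF D.EVar :=
  {C | ∃ v, D.label v = NLabel.Or ∧
    C = insert (negL (D.nvar v)) {l | ∃ u, D.edge v u ∧ l = posL (D.nvar u)}}

/-- Group N2: `v → v_i` for each ∧-node `v` and each child `v_i` of `v`. -/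
def grpN2 (D : NNF) : CNF D.EVar :=
  {C | ∃ v u, D.label v = NLabel.And ∧ D.edge v u ∧
    C = ({negL (D.nvar v), posL (D.nvar u)} : Clause D.EVar)}

/-- Group N3: `v → p₁ ∨ … ∨ p_k` for each non-root node `v` with predecessors
`p₁, …, p_k`. -/
def grpN3 (D : NNF) : CNF D.EVar :=
  {C | ∃ v, v ≠ D.root ∧
    C = insert (negL (D.nvar v)) {l | ∃ p, D.edge p v ∧ l = posL (D.nvar p)}}

/-- Group N4: the unit clause `¬l` for each domain variable `l = ⟦x_i = s⟧`
(`s ∈ Dom i`) that is not a leaf of `D`. -/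
def grpN4 (D : NNF) : CNF D.EVar :=
  {C | ∃ i s, s ∈ D.Dom i ∧ (∀ v, D.label v ≠ NLabel.Leaf i s) ∧
    C = ({negL (Sum.inl (i, s))} : Clause D.EVar)}

/-- Group N5: `amo*(S)` for each separator `S ∈ 𝒮 i` and each `i`, i.e. all
the clauses `¬u ∨ ¬w` for distinct `u, w ∈ S`. -/
def grpN5 (D : NNF) (𝒮 : ∀ _ : Fin D.n, Set (Set D.N)) : CNF D.EVar :=
  {C | ∃ i, ∃ S ∈ 𝒮 i, ∃ u ∈ S, ∃ w ∈ S, u ≠ w ∧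
    C = ({negL (D.nvar u), negL (D.nvar w)} : Clause D.EVar)}

/-- Group N6: `eo*(S)` for each separator `S ∈ 𝒮 i` and each `i`, i.e.
`amo*(S)` together with the clause `∨_{u ∈ S} u`. -/
def grpN6 (D : NNF) (𝒮 : ∀ _ : Fin D.n, Set (Set D.N)) : CNF D.EVar :=
  D.grpN5 𝒮 ∪ {C | ∃ i, ∃ S ∈ 𝒮 i, C = {l | ∃ u ∈ S, l = posL (D.nvar u)}}

/-- The formula `ψ_c`: the clauses of groups N1–N4 and N5 together with the
unit clause `ρ`. -/
def psiC (D : NNF) (𝒮 : ∀ _ : Fin D.n, Set (Set D.N)) : CNF D.EVar :=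
  D.grpN1 ∪ D.grpN2 ∪ D.grpN3 ∪ D.grpN4 ∪ D.grpN5 𝒮 ∪
    {({posL (D.nvar D.root)} : Clause D.EVar)}

/-- The formula `ψ_p`: the clauses of groups N1–N4 and N6 together with the
unit clause `ρ`. -/
def psiP (D : NNF) (𝒮 : ∀ _ : Fin D.n, Set (Set D.N)) : CNF D.EVar :=
  D.grpN1 ∪ D.grpN2 ∪ D.grpN3 ∪ D.grpN4 ∪ D.grpN6 𝒮 ∪
    {({posL (D.nvar D.root)} : Clause D.EVar)}

/-- The subgraph of `D` induced by a set of nodes. -/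
def induced (D : NNF) (Sn : Set D.N) : D.Subgraph where
  mem := Sn
  tedge := fun v u => D.edge v u ∧ v ∈ Sn ∧ u ∈ Sn
  le_edge := fun h => h.1
  mem_left := fun h => h.2.1
  mem_right := fun h => h.2.2

/-- The input variables of the encodings: the domain variables `⟦x_i = s⟧`
for `s ∈ Dom i`. -/
def inputVars (D : NNF) : Set D.EVar :=
  {w | ∃ i s, s ∈ D.Dom i ∧ w = Sum.inl (i, s)}

/-- The auxiliary variables of the encodings `ψ_c`, `ψ_p`: the variables of
the inner nodes of `D`. -/
def nodeVars (D : NNF) : Set D.EVar :=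
  {w | ∃ v, (D.label v = NLabel.And ∨ D.label v = NLabel.Or) ∧ w = Sum.inr v}

/-- `f_D'(⟦x⟧)` viewed as a function of assignments of the encoding
variables (it depends only on the domain variables). -/
def fDE (D : NNF) (a : D.EVar → Bool) : Prop :=
  D.fD' (fun p => a (Sum.inl p))

end NNF

/-!
Let `M` be a set of nodes containing `ρ`, all children of its ∧-nodes and some child of each of
its ∨-nodes (this is what N1, N2 and the unit clause `ρ` say about the set of true nodes).
By smoothness, from any node of `M` one descends inside `M` to a leaf of every
variable below it. If moreover `M` meets each separator at most once (N5), every node of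
`M ∩ H_i` other than `ρ` lies on each root-to-leaf path of `D_i` inside `M`: the separator
through the node meets that path in a node of `M`. Taking paths through a given edge, this makes
parents and chosen ∨-children unique, so `M` induces a minimal satisfying subtree.

Conversely, a minimal satisfying subtree `T` is a tree, so two of its nodes above a common leaf
are comparable. By d-consistency `T` has only one leaf of `x_i`, hence two nodes of `T` in a
separator of `D_i` lie on a common root-to-leaf path and coincide, while the path from `ρ` to
that leaf meets every separator. Hence an assignment whose true nodes form `T` satisfies
`ψ_p ⊇ ψ_c`.
-/

open Relation

namespace List

variable {α : Type*} {R S : α → α → Prop} {a b c d x : α} {l l₁ l₂ : List α}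

def IsChainFromTo (R : α → α → Prop) (a b : α) (l : List α) : Prop :=
  l.IsChain R ∧ l.head? = some a ∧ l.getLast? = some b

namespace IsChainFromTo

theorem singleton (R : α → α → Prop) (a : α) : [a].IsChainFromTo R a a :=
  ⟨.singleton a, rfl, rfl⟩

theorem cons (hab : R a b) (hl : l.IsChainFromTo R b c) : (a :: l).IsChainFromTo R a c := by
  obtain ⟨hc, hh, hl⟩ := hl
  cases l with
  | nil => simp at hh
  | cons y l =>
    obtain rfl : y = b := by simpa using hh
    exact ⟨hc.cons_cons hab, rfl, by rwa [getLast?_cons_cons]⟩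

theorem append (h₁ : l₁.IsChainFromTo R a b) (hbc : R b c) (h₂ : l₂.IsChainFromTo R c d) :
    (l₁ ++ l₂).IsChainFromTo R a d := by
  obtain ⟨hc₁, hh₁, hl₁⟩ := h₁
  obtain ⟨hc₂, hh₂, hl₂⟩ := h₂
  refine ⟨hc₁.append hc₂ (by simp [hl₁, hh₂, hbc]), ?_, ?_⟩
  · rw [head?_append, hh₁]; rfl
  · rw [getLast?_append, hl₂]; rfl

theorem imp (H : ∀ ⦃x y⦄, R x y → S x y) (h : l.IsChainFromTo R a b) :
    l.IsChainFromTo S a b :=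
  ⟨h.1.imp H, h.2⟩

theorem head_mem (h : l.IsChainFromTo R a b) : a ∈ l := mem_of_mem_head? h.2.1

theorem head_reflTransGen (h : l.IsChainFromTo R a b) (hx : x ∈ l) : ReflTransGen R a x :=
  h.1.induction (ReflTransGen R a ·) l (fun _ _ hxy hx => hx.tail hxy)
    (fun hne => by rw [(head_eq_iff_head?_eq_some hne).2 h.2.1]) x hx

theorem reflTransGen_last (h : l.IsChainFromTo R a b) (hx : x ∈ l) : ReflTransGen R x b :=
  h.1.backwards_induction (ReflTransGen R · b) l (fun _ _ hxy hy => hy.head hxy)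
    (fun hne => by rw [(getLast_eq_iff_getLast?_eq_some hne).2 h.2.2]) x hx

theorem exists_superset_of_reflTransGen (hl : l.IsChainFromTo R b c)
    (hab : ReflTransGen R a b) : ∃ l', l'.IsChainFromTo R a c ∧ l ⊆ l' := by
  induction hab using ReflTransGen.head_induction_on with
  | refl => exact ⟨l, hl, Subset.refl l⟩
  | head hab _ ih =>
    obtain ⟨l', hl', hsub⟩ := ih
    exact ⟨_ :: l', hl'.cons hab, fun x hx => mem_cons_of_mem _ (hsub hx)⟩

end IsChainFromTo

theorem exists_isChainFromTo_of_reflTransGen (h : ReflTransGen R a b) :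
    ∃ l : List α, l.IsChainFromTo R a b :=
  ((IsChainFromTo.singleton R b).exists_superset_of_reflTransGen h).imp fun _ h => h.1

end List

theorem CNF.sat_union {V : Type u} {a : V → Bool} {φ ψ : CNF V} :
    CNF.Sat a (φ ∪ ψ) ↔ CNF.Sat a φ ∧ CNF.Sat a ψ := by
  simp only [CNF.Sat, Set.mem_union, or_imp, forall_and]

theorem CNF.Sat.mono {V : Type u} {a : V → Bool} {φ ψ : CNF V} (h : CNF.Sat a φ)
    (hψ : ψ ⊆ φ) : CNF.Sat a ψ :=
  fun C hC => h C (hψ hC)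

theorem CNF.sat_unit_posL_iff {V : Type u} {a : V → Bool} (x : V) :
    CNF.Sat a {({posL x} : Clause V)} ↔ a x = true := by
  simp [CNF.Sat, Clause.Sat, Lit.eval, posL]

@[simp]
theorem Lit.eval_posL {V : Type u} {a : V → Bool} {x : V} : (posL x).eval a ↔ a x = true :=
  Iff.rfl

@[simp]
theorem Lit.eval_negL {V : Type u} {a : V → Bool} {x : V} : (negL x).eval a ↔ a x = false :=
  Iff.rfl

namespace NNF

variable {D : NNF}

theorem WF.reach_root (hwf : D.WF) (v : D.N) : D.Reach D.root v := hwf.2.2.2.2.2.1 v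

theorem WF.exists_mem_varsOf (hwf : D.WF) (v : D.N) : ∃ i, i ∈ D.varsOf v :=
  hwf.2.2.2.2.2.2.2 v

theorem WF.mem_varsOf_root (hwf : D.WF) (i : Fin D.n) : i ∈ D.varsOf D.root := by
  obtain ⟨v, s, hv⟩ := hwf.2.2.2.2.2.2.1 i
  exact ⟨v, s, hwf.reach_root v, hv⟩

theorem WF.not_reach_of_edge (hwf : D.WF) {u v : D.N} (h : D.edge v u) : ¬ D.Reach u v :=
  fun huv => hwf.2.1.transGen.irrefl.irrefl u (transGen_swap.2 (.tail' huv h))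

theorem WF.reach_antisymm (hwf : D.WF) {u v : D.N} (huv : D.Reach u v) (hvu : D.Reach v u) :
    u = v := by
  rcases huv.cases_tail with rfl | ⟨w, huw, hwv⟩
  · rfl
  · exact (hwf.not_reach_of_edge hwv (hvu.trans huw)).elim

theorem WF.not_edge_root (hwf : D.WF) (u : D.N) : ¬ D.edge u D.root :=
  fun h => hwf.not_reach_of_edge h (hwf.reach_root u)

theorem varsOf_subset_of_reach {x y : D.N} (h : D.Reach x y) : D.varsOf y ⊆ D.varsOf x :=
  fun _ ⟨u, s, hyu, hu⟩ => ⟨u, s, h.trans hyu, hu⟩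

theorem nvar_of_label_eq_leaf {v : D.N} {i : Fin D.n} {s : ℕ} (h : D.label v = .Leaf i s) :
    D.nvar v = .inl (i, s) := by
  simp [nvar, h]

theorem Subgraph.reach_of_reflTransGen (T : D.Subgraph) {v x : D.N}
    (h : ReflTransGen T.tedge v x) : D.Reach v x :=
  ReflTransGen.mono (fun _ _ => T.le_edge) _ _ h

theorem Subgraph.mem_of_reflTransGen (T : D.Subgraph) {v x : D.N} (hv : v ∈ T.mem)
    (h : ReflTransGen T.tedge v x) : x ∈ T.mem := by
  rcases h.cases_tail with rfl | ⟨_, _, h⟩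
  exacts [hv, T.mem_right h]

theorem isRLPath_of_isChainFromTo {i : Fin D.n} {l : List D.N} {t : D.N}
    (hl : l.IsChainFromTo D.edge D.root t) (ht : t ∈ D.Lset i) : D.IsRLPath i l := by
  obtain ⟨s, hs⟩ := ht
  exact ⟨List.ne_nil_of_mem hl.head_mem, fun v hv => ⟨t, s, hl.reflTransGen_last hv, hs⟩,
    hl.1, hl.2.1, t, hl.2.2, s, hs⟩

theorem WF.exists_leaf_of_mem_varsOf (hwf : D.WF) (hsm : D.Smooth) {T : D.Subgraph}
    (hAnd : ∀ v ∈ T.mem, D.label v = .And → ∀ u, D.edge v u → T.tedge v u)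
    (hOr : ∀ v ∈ T.mem, D.label v = .Or → ∃ u, T.tedge v u)
    {i : Fin D.n} {v : D.N} (hv : v ∈ T.mem) (hi : i ∈ D.varsOf v) :
    ∃ t ∈ D.Lset i, ReflTransGen T.tedge v t := by
  induction v using hwf.2.1.induction with
  | _ v ih =>
    obtain ⟨u, s, hvu, hu⟩ := hi
    rcases hvu.cases_head with rfl | ⟨w, hvw, hwu⟩
    · exact ⟨v, ⟨s, hu⟩, .refl⟩
    cases hlv : D.label v with
    | Leaf j s' => exact absurd hvw (hwf.2.2.2.1 v j s' hlv w)
    | And =>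
      have hT := hAnd v hv hlv w hvw
      obtain ⟨t, ht, hwt⟩ := ih w hvw (T.mem_right hT) ⟨u, s, hwu, hu⟩
      exact ⟨t, ht, .head hT hwt⟩
    | Or =>
      obtain ⟨w', hT⟩ := hOr v hv hlv
      have hi : i ∈ D.varsOf w' := hsm v w' hlv (T.le_edge hT) ▸ ⟨u, s, hvu, hu⟩
      obtain ⟨t, ht, hwt⟩ := ih w' (T.le_edge hT) (T.mem_right hT) hi
      exact ⟨t, ht, .head hT hwt⟩

theorem CoveredBy.mem_of_isRLPath {𝒮 : ∀ _ : Fin D.n, Set (Set D.N)} (hcov : D.CoveredBy 𝒮)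
    {M : Set D.N} (hamo : ∀ i, ∀ S ∈ 𝒮 i, (S ∩ M).Subsingleton) {i : Fin D.n}
    {P : List D.N} (hP : D.IsRLPath i P) (hPM : ∀ y ∈ P, y ∈ M) {x : D.N}
    (hx : x ∈ D.H i \ {D.root}) (hxM : x ∈ M) : x ∈ P := by
  obtain ⟨S, hS, hxS⟩ : x ∈ ⋃₀ 𝒮 i := (hcov i).2 ▸ hx
  obtain ⟨z, ⟨hzP, hzS⟩, -⟩ := ((hcov i).1 S hS).2 P hP
  rwa [hamo i S hS ⟨hxS, hxM⟩ ⟨hzS, hPM z hzP⟩]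

section Clauses

variable {a : D.EVar → Bool}

theorem sat_grpN1_iff : CNF.Sat a D.grpN1 ↔
    ∀ v, D.label v = .Or → a (D.nvar v) = true →
      ∃ u, D.edge v u ∧ a (D.nvar u) = true := by
  refine ⟨fun h v hv hav => ?_, ?_⟩
  · obtain ⟨l, hl | ⟨u, hu, rfl⟩, hle⟩ := h _ ⟨v, hv, rfl⟩
    · simp_all
    · exact ⟨u, hu, hle⟩
  · rintro h _ ⟨v, hv, rfl⟩
    cases hav : a (D.nvar v)
    · exact ⟨_, Set.mem_insert _ _, hav⟩
    · obtain ⟨u, hu, hau⟩ := h v hv hav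
      exact ⟨_, Set.mem_insert_of_mem _ ⟨u, hu, rfl⟩, hau⟩

theorem sat_grpN2_iff : CNF.Sat a D.grpN2 ↔
    ∀ v u, D.label v = .And → D.edge v u → a (D.nvar v) = true → a (D.nvar u) = true := by
  refine ⟨fun h v u hv hvu hav => ?_, ?_⟩
  · obtain ⟨l, hl | hl, hle⟩ := h _ ⟨v, u, hv, hvu, rfl⟩ <;> simp_all
  · rintro h _ ⟨v, u, hv, hvu, rfl⟩
    cases hav : a (D.nvar v)
    · exact ⟨_, Set.mem_insert _ _, hav⟩
    · exact ⟨_, Set.mem_insert_of_mem _ rfl, h v u hv hvu hav⟩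

theorem sat_grpN3_iff : CNF.Sat a D.grpN3 ↔
    ∀ v, v ≠ D.root → a (D.nvar v) = true → ∃ p, D.edge p v ∧ a (D.nvar p) = true := by
  refine ⟨fun h v hv hav => ?_, ?_⟩
  · obtain ⟨l, hl | ⟨p, hp, rfl⟩, hle⟩ := h _ ⟨v, hv, rfl⟩
    · simp_all
    · exact ⟨p, hp, hle⟩
  · rintro h _ ⟨v, hv, rfl⟩
    cases hav : a (D.nvar v)
    · exact ⟨_, Set.mem_insert _ _, hav⟩
    · obtain ⟨p, hp, hap⟩ := h v hv hav
      exact ⟨_, Set.mem_insert_of_mem _ ⟨p, hp, rfl⟩, hap⟩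

theorem sat_grpN4_iff : CNF.Sat a D.grpN4 ↔
    ∀ i s, s ∈ D.Dom i → (∀ v, D.label v ≠ .Leaf i s) → a (.inl (i, s)) = false := by
  refine ⟨fun h i s hs hno => ?_, ?_⟩
  · obtain ⟨l, rfl, hle⟩ := h _ ⟨i, s, hs, hno, rfl⟩
    exact hle
  · rintro h _ ⟨i, s, hs, hno, rfl⟩
    exact ⟨_, rfl, h i s hs hno⟩

theorem sat_grpN5_iff (𝒮 : ∀ _ : Fin D.n, Set (Set D.N)) : CNF.Sat a (D.grpN5 𝒮) ↔
    ∀ i, ∀ S ∈ 𝒮 i, (S ∩ {v | a (D.nvar v) = true}).Subsingleton := by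
  refine ⟨fun h i S hS u ⟨huS, hu⟩ w ⟨hwS, hw⟩ => ?_, ?_⟩
  · by_contra hne
    obtain ⟨l, hl | hl, hle⟩ := h _ ⟨i, S, hS, u, huS, w, hwS, hne, rfl⟩ <;> simp_all
  · rintro h _ ⟨i, S, hS, u, huS, w, hwS, hne, rfl⟩
    cases hau : a (D.nvar u)
    · exact ⟨_, Set.mem_insert _ _, hau⟩
    · cases haw : a (D.nvar w)
      · exact ⟨_, Set.mem_insert_of_mem _ rfl, haw⟩
      · exact (hne (h i S hS ⟨huS, hau⟩ ⟨hwS, haw⟩)).elim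

theorem sat_grpN6_iff (𝒮 : ∀ _ : Fin D.n, Set (Set D.N)) : CNF.Sat a (D.grpN6 𝒮) ↔
    CNF.Sat a (D.grpN5 𝒮) ∧
      ∀ i, ∀ S ∈ 𝒮 i, (S ∩ {v | a (D.nvar v) = true}).Nonempty := by
  refine CNF.sat_union.trans (and_congr_right fun _ => ⟨fun h i S hS => ?_, ?_⟩)
  · obtain ⟨l, ⟨u, huS, rfl⟩, hle⟩ := h _ ⟨i, S, hS, rfl⟩
    exact ⟨u, huS, hle⟩
  · rintro h _ ⟨i, S, hS, rfl⟩
    obtain ⟨u, huS, hu⟩ := h i S hS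
    exact ⟨_, ⟨u, huS, rfl⟩, hu⟩

theorem psiC_subset_psiP (𝒮 : ∀ _ : Fin D.n, Set (Set D.N)) : D.psiC 𝒮 ⊆ D.psiP 𝒮 := by
  unfold psiC psiP grpN6
  gcongr
  exact Set.subset_union_left

end Clauses

section InducedSubtree

variable {𝒮 : ∀ _ : Fin D.n, Set (Set D.N)} {M : Set D.N} {i : Fin D.n} {t x : D.N}

theorem CoveredBy.reflTransGen_root_of_mem (hcov : D.CoveredBy 𝒮)
    (hamo : ∀ i, ∀ S ∈ 𝒮 i, (S ∩ M).Subsingleton) (hroot : D.root ∈ M)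
    (hrt : ReflTransGen (D.induced M).tedge D.root t) (ht : t ∈ D.Lset i)
    (hx : x ∈ D.H i \ {D.root}) (hxM : x ∈ M) :
    ReflTransGen (D.induced M).tedge D.root x := by
  obtain ⟨P, hP⟩ := List.exists_isChainFromTo_of_reflTransGen hrt
  set T := D.induced M
  have hPM (y) (hy : y ∈ P) : y ∈ M := T.mem_of_reflTransGen hroot (hP.head_reflTransGen hy)
  exact hP.head_reflTransGen <| hcov.mem_of_isRLPath hamo
    (isRLPath_of_isChainFromTo (hP.imp fun _ _ => T.le_edge) ht) hPM hx hxM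

theorem CoveredBy.reach_or_reach_of_tedge (hcov : D.CoveredBy 𝒮)
    (hamo : ∀ i, ∀ S ∈ 𝒮 i, (S ∩ M).Subsingleton) (hroot : D.root ∈ M) {v w : D.N}
    (hv : ReflTransGen (D.induced M).tedge D.root v) (hvw : (D.induced M).tedge v w)
    (hwt : ReflTransGen (D.induced M).tedge w t) (ht : t ∈ D.Lset i)
    (hx : x ∈ D.H i \ {D.root}) (hxM : x ∈ M) : D.Reach x v ∨ D.Reach w x := by
  set T := D.induced M
  obtain ⟨P₁, hP₁⟩ := List.exists_isChainFromTo_of_reflTransGen hv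
  obtain ⟨P₂, hP₂⟩ := List.exists_isChainFromTo_of_reflTransGen hwt
  have hP := hP₁.append hvw hP₂
  have hPM (y) (hy : y ∈ P₁ ++ P₂) : y ∈ M :=
    T.mem_of_reflTransGen hroot (hP.head_reflTransGen hy)
  rcases List.mem_append.1 (hcov.mem_of_isRLPath hamo
    (isRLPath_of_isChainFromTo (hP.imp fun _ _ => T.le_edge) ht) hPM hx hxM) with h | h
  · exact .inl (T.reach_of_reflTransGen (hP₁.reflTransGen_last h))
  · exact .inr (T.reach_of_reflTransGen (hP₂.head_reflTransGen h))

theorem isMST_induced (hwf : D.WF) (hsm : D.Smooth) (hcov : D.CoveredBy 𝒮)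
    (hroot : D.root ∈ M) (hAnd : ∀ v ∈ M, D.label v = .And → ∀ u, D.edge v u → u ∈ M)
    (hOr : ∀ v ∈ M, D.label v = .Or → ∃ u, D.edge v u ∧ u ∈ M)
    (hamo : ∀ i, ∀ S ∈ 𝒮 i, (S ∩ M).Subsingleton) : D.IsMST (D.induced M) := by
  set T := D.induced M
  have hAndT (v) (hv : v ∈ M) (hl : D.label v = .And) (u) (h : D.edge v u) : T.tedge v u :=
    ⟨h, hv, hAnd v hv hl u h⟩
  have hOrT (v) (hv : v ∈ M) (hl : D.label v = .Or) : ∃ u, T.tedge v u :=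
    (hOr v hv hl).imp fun u h => ⟨h.1, hv, h.2⟩
  have hreach (x) (hx : x ∈ M) : ReflTransGen T.tedge D.root x := by
    obtain ⟨i, hi⟩ := hwf.exists_mem_varsOf x
    obtain ⟨t, ht, hrt⟩ :=
      hwf.exists_leaf_of_mem_varsOf hsm (T := T) hAndT hOrT hroot (hwf.mem_varsOf_root i)
    by_cases hxr : x = D.root
    · exact hxr ▸ .refl
    · exact hcov.reflTransGen_root_of_mem hamo hroot hrt ht ⟨hi, hxr⟩ hx
  have hcmp {v w x i} (hvw : T.tedge v w) (hi : i ∈ D.varsOf w) (hx : x ∈ D.H i \ {D.root})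
      (hxM : x ∈ M) : D.Reach x v ∨ D.Reach w x := by
    obtain ⟨t, ht, hwt⟩ := hwf.exists_leaf_of_mem_varsOf hsm (T := T) hAndT hOrT hvw.2.2 hi
    exact hcov.reach_or_reach_of_tedge hamo hroot (hreach v hvw.2.1) hvw hwt ht hx hxM
  refine ⟨hroot, hreach, fun v hv hvr => ?_, fun u h => hwf.not_edge_root u h.1, hAndT,
    fun v hv hl => ?_⟩
  · -- two parents `p`, `q` of `v` in `T` reach each other: `p` lies on a path through `q → v`
    have hpar (p q) (hp : T.tedge p v) (hq : T.tedge q v) : D.Reach p q := by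
      by_cases hpr : p = D.root
      · exact hpr ▸ hwf.reach_root q
      obtain ⟨i, hi⟩ := hwf.exists_mem_varsOf v
      exact (hcmp hq hi ⟨varsOf_subset_of_reach (.single hp.1) hi, hpr⟩ hp.2.1).resolve_right
        (hwf.not_reach_of_edge hp.1)
    obtain ⟨p, -, hpv⟩ := (hreach v hv).cases_tail.resolve_left hvr
    exact ⟨p, hpv, fun q hqv => hwf.reach_antisymm (hpar q p hqv hpv) (hpar p q hpv hqv)⟩
  · have hchild (u w) (hu : T.tedge v u) (hw : T.tedge v w) : D.Reach w u := by
      obtain ⟨i, hi⟩ := hwf.exists_mem_varsOf v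
      have hvars {y} (hy : T.tedge v y) : D.varsOf y = D.varsOf v := hsm v y hl hy.1
      have hu' : u ∈ D.H i \ {D.root} :=
        ⟨show i ∈ D.varsOf u from (hvars hu).symm ▸ hi,
          fun h => hwf.not_edge_root v (h ▸ hu.1)⟩
      exact (hcmp hw ((hvars hw).symm ▸ hi) hu' hu.2.2).resolve_left
        (hwf.not_reach_of_edge hu.1)
    obtain ⟨u, hu⟩ := hOrT v hv hl
    exact ⟨u, hu, fun w hw => hwf.reach_antisymm (hchild u w hu hw) (hchild w u hw hu)⟩

end InducedSubtree

namespace IsMST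

variable {T : D.Subgraph} {i : Fin D.n} {S : Set D.N}

theorem leftUnique (hT : D.IsMST T) : Relator.LeftUnique T.tedge := fun p _ v hp hq =>
  (hT.2.2.1 v (T.mem_right hp) fun h => hT.2.2.2.1 p (h ▸ hp)).unique hp hq

theorem exists_leaf (hT : D.IsMST T) (hwf : D.WF) (hsm : D.Smooth) {v : D.N} (hv : v ∈ T.mem)
    (hi : i ∈ D.varsOf v) : ∃ t ∈ D.Lset i, ReflTransGen T.tedge v t :=
  hwf.exists_leaf_of_mem_varsOf hsm hT.2.2.2.2.1 (fun v hv hl => (hT.2.2.2.2.2 v hv hl).exists)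
    hv hi

theorem inter_nonempty_of_isSeparator (hT : D.IsMST T) (hwf : D.WF) (hsm : D.Smooth)
    (hS : D.IsSeparator i S) : (S ∩ T.mem).Nonempty := by
  obtain ⟨t, ht, hrt⟩ := hT.exists_leaf hwf hsm hT.1 (hwf.mem_varsOf_root i)
  obtain ⟨P, hP⟩ := List.exists_isChainFromTo_of_reflTransGen hrt
  obtain ⟨z, ⟨hzP, hzS⟩, -⟩ :=
    hS.2 P (isRLPath_of_isChainFromTo (hP.imp fun _ _ => T.le_edge) ht)
  exact ⟨z, hzS, T.mem_of_reflTransGen hT.1 (hP.head_reflTransGen hzP)⟩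

theorem inter_subsingleton_of_isSeparator (hT : D.IsMST T) (hwf : D.WF) (hsm : D.Smooth)
    (hL : (D.Lset i ∩ T.mem).Subsingleton) (hS : D.IsSeparator i S) :
    (S ∩ T.mem).Subsingleton := by
  -- a root-to-leaf path through `u ⇝ w ⇝ t` meets `S` in both `u` and `w`
  have key {u w t} (hu : u ∈ S ∩ T.mem) (hw : w ∈ S) (ht : t ∈ D.Lset i)
      (huw : ReflTransGen T.tedge u w) (hwt : ReflTransGen T.tedge w t) : u = w := by
    obtain ⟨P₁, hP₁⟩ := List.exists_isChainFromTo_of_reflTransGen hwt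
    obtain ⟨P₂, hP₂, h₁₂⟩ := hP₁.exists_superset_of_reflTransGen huw
    obtain ⟨P, hP, h₂⟩ := hP₂.exists_superset_of_reflTransGen (hT.2.1 u hu.2)
    obtain ⟨z, -, hz⟩ := hS.2 P (isRLPath_of_isChainFromTo (hP.imp fun _ _ => T.le_edge) ht)
    exact (hz u ⟨h₂ hP₂.head_mem, hu.1⟩).trans
      (hz w ⟨h₂ (h₁₂ hP₁.head_mem), hw⟩).symm
  intro u hu w hw
  obtain ⟨t, ht, hut⟩ := hT.exists_leaf hwf hsm hu.2 (hS.1 hu.1)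
  obtain ⟨t', ht', hwt'⟩ := hT.exists_leaf hwf hsm hw.2 (hS.1 hw.1)
  obtain rfl : t = t' :=
    hL ⟨ht, T.mem_of_reflTransGen hu.2 hut⟩ ⟨ht', T.mem_of_reflTransGen hw.2 hwt'⟩
  rcases ReflTransGen.total_of_right_unique (r := Function.swap T.tedge)
    (fun _ _ _ h h' => hT.leftUnique h h') (reflTransGen_swap.2 hut) (reflTransGen_swap.2 hwt')
    with h | h
  · exact (key hw hu.1 ht (reflTransGen_swap.1 h) hut).symm
  · exact key hu hw.1 ht (reflTransGen_swap.1 h) hwt'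

end IsMST

section Encoding

variable {𝒮 : ∀ _ : Fin D.n, Set (Set D.N)} {a : D.EVar → Bool}

theorem WF.lset_inter_subsingleton (hwf : D.WF)
    (hdc : ∀ i, ∃! s, s ∈ D.Dom i ∧ a (.inl (i, s)) = true) (i : Fin D.n) :
    (D.Lset i ∩ {v | a (D.nvar v) = true}).Subsingleton := by
  rintro t ⟨⟨s, hs⟩, ht⟩ t' ⟨⟨s', hs'⟩, ht'⟩
  simp only [Set.mem_setOf_eq, nvar_of_label_eq_leaf hs, nvar_of_label_eq_leaf hs'] at ht ht'
  obtain rfl := (hdc i).unique ⟨hwf.2.2.1 t i s hs, ht⟩ ⟨hwf.2.2.1 t' i s' hs', ht'⟩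
  exact hwf.2.2.2.2.1 t t' i s hs hs'

theorem IsMST.exists_label_eq_leaf (hT : D.IsMST (D.induced {v | a (D.nvar v) = true}))
    (hwf : D.WF) (hsm : D.Smooth) (hdc : ∀ i, ∃! s, s ∈ D.Dom i ∧ a (.inl (i, s)) = true)
    {i : Fin D.n} {s : ℕ} (hs : s ∈ D.Dom i) (ha : a (.inl (i, s)) = true) :
    ∃ v, D.label v = .Leaf i s := by
  obtain ⟨t, ⟨s', hs'⟩, hrt⟩ := hT.exists_leaf hwf hsm hT.1 (hwf.mem_varsOf_root i)
  have ht : a (.inl (i, s')) = true :=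
    nvar_of_label_eq_leaf hs' ▸ (D.induced _).mem_of_reflTransGen hT.1 hrt
  obtain rfl := (hdc i).unique ⟨hs, ha⟩ ⟨hwf.2.2.1 t i s' hs', ht⟩
  exact ⟨t, hs'⟩

theorem isMST_of_sat_psiC (hwf : D.WF) (hsm : D.Smooth) (hcov : D.CoveredBy 𝒮)
    (h : CNF.Sat a (D.psiC 𝒮)) : D.IsMST (D.induced {v | a (D.nvar v) = true}) := by
  simp only [psiC, CNF.sat_union, sat_grpN1_iff, sat_grpN2_iff, sat_grpN5_iff,
    CNF.sat_unit_posL_iff] at h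
  obtain ⟨⟨⟨⟨⟨hN1, hN2⟩, -⟩, -⟩, hN5⟩, hroot⟩ := h
  exact isMST_induced hwf hsm hcov hroot (fun v hv hl u h => hN2 v u hl h hv)
    (fun v hv hl => hN1 v hl hv) hN5

theorem sat_psiP_of_isMST (hwf : D.WF) (hsm : D.Smooth) (hcov : D.CoveredBy 𝒮)
    (hdc : ∀ i, ∃! s, s ∈ D.Dom i ∧ a (.inl (i, s)) = true)
    (hT : D.IsMST (D.induced {v | a (D.nvar v) = true})) : CNF.Sat a (D.psiP 𝒮) := by
  simp only [psiP, CNF.sat_union, sat_grpN1_iff, sat_grpN2_iff, sat_grpN3_iff, sat_grpN4_iff,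
    sat_grpN6_iff, sat_grpN5_iff, CNF.sat_unit_posL_iff]
  refine ⟨⟨⟨⟨⟨fun v hl hv => ?_, fun v u hl h hv => (hT.2.2.2.2.1 v hv hl u h).2.2⟩,
    fun v hvr hv => ?_⟩, fun i s hs hno => ?_⟩, fun i S hS => ?_, fun i S hS => ?_⟩, hT.1⟩
  · exact (hT.2.2.2.2.2 v hv hl).exists.imp fun u h => ⟨h.1, h.2.2⟩
  · exact (hT.2.2.1 v hv hvr).exists.imp fun p h => ⟨h.1, h.2.1⟩
  · refine Bool.eq_false_iff.2 fun ha => ?_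
    obtain ⟨v, hv⟩ := hT.exists_label_eq_leaf hwf hsm hdc hs ha
    exact hno v hv
  · exact hT.inter_subsingleton_of_isSeparator hwf hsm (hwf.lset_inter_subsingleton hdc i)
      ((hcov i).1 S hS)
  · exact hT.inter_nonempty_of_isSeparator hwf hsm ((hcov i).1 S hS)

end Encoding

end NNF

theorem stmt13_general (D : NNF) (hwf : D.WF) (hsm : D.Smooth)
    (𝒮 : ∀ _ : Fin D.n, Set (Set D.N)) (hcov : D.CoveredBy 𝒮)
    (a : D.EVar → Bool)
    (hdc : ∀ i, ∃! s, s ∈ D.Dom i ∧ a (Sum.inl (i, s)) = true) :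
    (D.IsMST (D.induced {v | a (D.nvar v) = true}) ↔ CNF.Sat a (D.psiC 𝒮)) ∧
    (CNF.Sat a (D.psiC 𝒮) ↔ CNF.Sat a (D.psiP 𝒮)) := by
  have hCM : CNF.Sat a (D.psiC 𝒮) → D.IsMST (D.induced {v | a (D.nvar v) = true}) :=
    NNF.isMST_of_sat_psiC hwf hsm hcov
  have hMP := NNF.sat_psiP_of_isMST hwf hsm hcov hdc
  have hPC (h : CNF.Sat a (D.psiP 𝒮)) : CNF.Sat a (D.psiC 𝒮) :=
    h.mono (D.psiC_subset_psiP 𝒮)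
  exact ⟨⟨fun h => hPC (hMP h), hCM⟩, ⟨fun h => hMP (hCM h), hPC⟩⟩

/-- Let `D` be a smooth DNNF covered by the separator
collections `𝒮_i` and let `a` be a d-consistent total assignment of the
domain variables and the node variables.  Then the following are equivalent:
(i) the set of nodes `v` with `a(v) = 1` induces a minimal satisfying subtree
of `D`; (ii) `a` satisfies `ψ_c`; (iii) `a` satisfies `ψ_p`. -/
theorem stmt13 (D : NNF) (hwf : D.WF) (hdec : D.Decomposable) (hsm : D.Smooth)
    (𝒮 : ∀ _ : Fin D.n, Set (Set D.N)) (hcov : D.CoveredBy 𝒮)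
    (a : D.EVar → Bool)
    (hdc : ∀ i, ∃! s, s ∈ D.Dom i ∧ a (Sum.inl (i, s)) = true) :
    (D.IsMST (D.induced {v | a (D.nvar v) = true}) ↔ CNF.Sat a (D.psiC 𝒮)) ∧
    (CNF.Sat a (D.psiC 𝒮) ↔ CNF.Sat a (D.psiP 𝒮)) :=
  stmt13_general D hwf hsm 𝒮 hcov a hdc
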